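/- Let (X_n) be a sequence of Banach spaces containing a subsequence that contains isomorphs of an infinite-dimensional Banach space X uniformly (there are δ > 0 and into-isomorphisms R_n : X → X_n with max{‖R_n‖, ‖R_n⁻¹‖} ≤ δ). Then for every 0 < p < ∞, the set (Σ_n X_n)_p \ ⋃_{0<q<p}(Σ_n X_n)_q together with 0 contains a closed subspace of (Σ_n X_n)_p of dimension dim X. -/

import Mathlib

/-!
Fix a positive summable sequence `a` with `∑ a n ^ r = ∞` for every `r < 1`, e.g.
`a n = 1 / ((n + 3) log² (n + 3))`, and send `x : X` to the sequence carrying `a n ^ (1/p) • R n x`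
in coordinate `k n` and `0` elsewhere. The bound `‖R n‖ ≤ δ` puts the image in `ℓ_p`, while
`‖R n x‖ ≥ ‖x‖ / δ` makes its `ℓ_q`-sum dominate `∑ a n ^ (q/p) = ∞` for `q < p`. A single
coordinate already controls `x` from below, so the map is a uniform embedding of the complete
space `X` even for the product topology, which is coarser than `ℓ_p`-convergence; hence its range
is closed.
-/

open Filter Topology Real

theorem inv_mul_log_sq_le_inv_log_sub_inv_log {x : ℝ} (hx : 1 < x) :
    ((x + 1) * log (x + 1) ^ 2)⁻¹ ≤ (log x)⁻¹ - (log (x + 1))⁻¹ := by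
  have hA : 0 < log x := log_pos hx
  have hAB : log x ≤ log (x + 1) := log_le_log (by linarith) (by linarith)
  have hB : 0 < log (x + 1) := hA.trans_le hAB
  have hgap : (x + 1)⁻¹ ≤ log (x + 1) - log x := by
    have := one_sub_inv_le_log_of_pos (x := (x + 1) / x) (by positivity)
    rw [log_div (by positivity) (by positivity), inv_div] at this
    convert this using 1
    field_simp
    ring
  calc ((x + 1) * log (x + 1) ^ 2)⁻¹ = (x + 1)⁻¹ / (log (x + 1) * log (x + 1)) := by
        rw [sq, div_eq_mul_inv, mul_inv]
    _ ≤ (log (x + 1) - log x) / (log x * log (x + 1)) :=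
      div_le_div₀ (by linarith) hgap (mul_pos hA hB) (by gcongr)
    _ = (log x)⁻¹ - (log (x + 1))⁻¹ := by field_simp

theorem summable_inv_mul_log_sq :
    Summable fun n : ℕ => (((n : ℝ) + 3) * log ((n : ℝ) + 3) ^ 2)⁻¹ := by
  refine summable_of_sum_range_le (c := (log 2)⁻¹) (fun n => by positivity) fun N => ?_
  calc ∑ n ∈ Finset.range N, (((n : ℝ) + 3) * log ((n : ℝ) + 3) ^ 2)⁻¹
      ≤ ∑ n ∈ Finset.range N, ((log ((n : ℝ) + 2))⁻¹ - (log (((n + 1 : ℕ) : ℝ) + 2))⁻¹) := by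
        refine Finset.sum_le_sum fun n _ => ?_
        have := inv_mul_log_sq_le_inv_log_sub_inv_log (x := (n : ℝ) + 2)
          (by linarith [n.cast_nonneg (α := ℝ)])
        push_cast
        ring_nf at this ⊢
        exact this
    _ = (log 2)⁻¹ - (log ((N : ℝ) + 2))⁻¹ := by
        rw [Finset.sum_range_sub' (fun n : ℕ => (log ((n : ℝ) + 2))⁻¹)]
        norm_num
    _ ≤ (log 2)⁻¹ :=
        sub_le_self _ (inv_nonneg.2 (log_nonneg (by linarith [N.cast_nonneg (α := ℝ)])))

theorem eventually_inv_le_inv_mul_log_sq_rpow {r : ℝ} (hr : r < 1) :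
    ∀ᶠ x : ℝ in atTop, x⁻¹ ≤ (x * log x ^ 2)⁻¹ ^ r := by
  filter_upwards [(isLittleO_log_rpow_rpow_atTop (2 * r) (sub_pos.2 hr)).bound one_pos,
    eventually_gt_atTop 1] with x hlog hx
  have hL : 0 < log x := log_pos hx
  rw [one_mul, norm_of_nonneg (by positivity), norm_of_nonneg (by positivity)] at hlog
  have hpow : (x * log x ^ 2) ^ r ≤ x := calc
    (x * log x ^ 2) ^ r = x ^ r * log x ^ (2 * r) := by
      rw [mul_rpow (by positivity) (by positivity), ← rpow_natCast, ← rpow_mul hL.le]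
      norm_num
    _ ≤ x ^ r * x ^ (1 - r) := by gcongr
    _ = x := by rw [← rpow_add (by linarith), add_sub_cancel, rpow_one]
  rw [inv_rpow (by positivity)]
  exact inv_anti₀ (by positivity) hpow

theorem not_summable_inv_mul_log_sq_rpow {r : ℝ} (hr : r < 1) :
    ¬ Summable fun n : ℕ => (((n : ℝ) + 3) * log ((n : ℝ) + 3) ^ 2)⁻¹ ^ r := by
  intro h
  have hshift : Tendsto (fun n : ℕ => (n : ℝ) + 3) atTop atTop :=
    tendsto_atTop_add_const_right _ 3 tendsto_natCast_atTop_atTop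
  have : Summable fun n : ℕ => ((n + 3 : ℕ) : ℝ)⁻¹ := by
    refine h.of_norm_bounded_eventually_nat ?_
    filter_upwards [hshift.eventually (eventually_inv_le_inv_mul_log_sq_rpow hr)] with n hn
    rw [norm_of_nonneg (by positivity)]
    exact_mod_cast hn
  exact Real.not_summable_natCast_inv ((summable_nat_add_iff 3).1 this)

theorem exists_summable_forall_not_summable_rpow :
    ∃ a : ℕ → ℝ, (∀ n, 0 < a n) ∧ Summable a ∧ ∀ r : ℝ, r < 1 → ¬ Summable fun n => a n ^ r := by
  refine ⟨fun n : ℕ => (((n : ℝ) + 3) * log ((n : ℝ) + 3) ^ 2)⁻¹, fun n => ?_, ?_, ?_⟩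
  · have : 0 < log ((n : ℝ) + 3) := log_pos (by linarith [n.cast_nonneg (α := ℝ)])
    positivity
  · exact summable_inv_mul_log_sq
  · exact fun r hr => not_summable_inv_mul_log_sq_rpow hr

section ExtendByZero

variable {Y : ℕ → Type*} [∀ m, NormedAddCommGroup (Y m)] [∀ m, NormedSpace ℝ (Y m)]
  {k : ℕ → ℕ} (hk : Function.Injective k)

open Classical in
noncomputable def extendByZero : (∀ n, Y (k n)) →ₗ[ℝ] ∀ m, Y m :=
  LinearMap.pi fun m => if h : m ∈ Set.range k then
    LinearMap.proj (R := ℝ) (φ := fun i : Set.range k => Y i) ⟨m, h⟩ ∘ₗ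
      (LinearEquiv.piCongrLeft ℝ (fun i : Set.range k => Y i) (Equiv.ofInjective k hk)).toLinearMap
    else 0

theorem extendByZero_apply_self (g : ∀ n, Y (k n)) (n : ℕ) : extendByZero hk g (k n) = g n := by
  have h : k n ∈ Set.range k := ⟨n, rfl⟩
  simp only [extendByZero, LinearMap.pi_apply, dif_pos h]
  exact Equiv.piCongrLeft_apply_apply (fun i : Set.range k => Y i) (Equiv.ofInjective k hk) g n

theorem extendByZero_apply_of_notMem {m : ℕ} (hm : m ∉ Set.range k) (g : ∀ n, Y (k n)) :
    extendByZero hk g m = 0 := by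
  simp [extendByZero, hm]

theorem summable_norm_rpow_extendByZero_iff {q : ℝ} (hq : q ≠ 0) (g : ∀ n, Y (k n)) :
    (Summable fun m => ‖extendByZero hk g m‖ ^ q) ↔ Summable fun n => ‖g n‖ ^ q := by
  rw [← hk.summable_iff fun m hm => by
    rw [extendByZero_apply_of_notMem hk hm, norm_zero, Real.zero_rpow hq]]
  simp only [Function.comp_def, extendByZero_apply_self]

end ExtendByZero

theorem isClosed_range_of_antilipschitzWith_comp {α β γ : Type*} [PseudoEMetricSpace α]
    [CompleteSpace α] [UniformSpace β] [T0Space β] [PseudoEMetricSpace γ] {f : α → β} {g : β → γ}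
    {K : NNReal} (hf : UniformContinuous f) (hg : UniformContinuous g)
    (hgf : AntilipschitzWith K (g ∘ f)) : IsClosed (Set.range f) :=
  (IsUniformInducing.of_comp hf hg (hgf.isUniformInducing (hg.comp hf))).isComplete_range.isClosed

section WeightedEmbedding

variable {X : Type*} [NormedAddCommGroup X] [NormedSpace ℝ X]
  {Y : ℕ → Type*} [∀ m, NormedAddCommGroup (Y m)] [∀ m, NormedSpace ℝ (Y m)]
  {k : ℕ → ℕ} (hk : Function.Injective k) (R : ∀ n, X →L[ℝ] Y (k n)) (w : ℕ → ℝ)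

noncomputable def weightedEmbedding : X →ₗ[ℝ] ∀ m, Y m :=
  extendByZero hk ∘ₗ LinearMap.pi fun n => w n • (R n : X →ₗ[ℝ] Y (k n))

theorem weightedEmbedding_apply_self (x : X) (n : ℕ) :
    weightedEmbedding hk R w x (k n) = w n • R n x :=
  extendByZero_apply_self hk _ n

theorem weightedEmbedding_apply_of_notMem {m : ℕ} (hm : m ∉ Set.range k) (x : X) :
    weightedEmbedding hk R w x m = 0 :=
  extendByZero_apply_of_notMem hk hm _

theorem summable_norm_rpow_weightedEmbedding_iff {q : ℝ} (hq : q ≠ 0) (x : X) :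
    (Summable fun m => ‖weightedEmbedding hk R w x m‖ ^ q) ↔
      Summable fun n => |w n| ^ q * ‖R n x‖ ^ q := by
  refine (summable_norm_rpow_extendByZero_iff hk hq _).trans (summable_congr fun n => ?_)
  rw [LinearMap.pi_apply, LinearMap.smul_apply, ContinuousLinearMap.coe_coe, norm_smul,
    Real.norm_eq_abs, Real.mul_rpow (abs_nonneg _) (norm_nonneg _)]

theorem summable_norm_rpow_weightedEmbedding {q δ : ℝ} (hq : 0 < q)
    (hw : Summable fun n => |w n| ^ q) (hR : ∀ n, ‖R n‖ ≤ δ) (x : X) :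
    Summable fun m => ‖weightedEmbedding hk R w x m‖ ^ q := by
  rw [summable_norm_rpow_weightedEmbedding_iff hk R w hq.ne']
  refine (hw.mul_right ((δ * ‖x‖) ^ q)).of_nonneg_of_le (fun n => by positivity) fun n => ?_
  gcongr
  exact (R n).le_of_opNorm_le (hR n) x

theorem not_summable_norm_rpow_weightedEmbedding {q δ : ℝ} (hq : 0 < q)
    (hw : ¬ Summable fun n => |w n| ^ q) (hδ : 0 ≤ δ) (hRinv : ∀ n x, ‖x‖ ≤ δ * ‖R n x‖)
    {x : X} (hx : x ≠ 0) :
    ¬ Summable fun m => ‖weightedEmbedding hk R w x m‖ ^ q := by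
  rw [summable_norm_rpow_weightedEmbedding_iff hk R w hq.ne']
  intro hsum
  refine hw <| (summable_mul_right_iff (a := ‖x‖ ^ q) (by positivity)).1 <|
    (hsum.mul_left (δ ^ q)).of_nonneg_of_le (fun n => by positivity) fun n => ?_
  calc |w n| ^ q * ‖x‖ ^ q ≤ |w n| ^ q * (δ * ‖R n x‖) ^ q := by gcongr; exact hRinv n x
    _ = δ ^ q * (|w n| ^ q * ‖R n x‖ ^ q) := by
      rw [Real.mul_rpow hδ (norm_nonneg _)]; ring

theorem antilipschitzWith_weightedEmbedding_apply {δ : ℝ} {n : ℕ} (hw : w n ≠ 0)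
    (hRinv : ∀ x, ‖x‖ ≤ δ * ‖R n x‖) :
    AntilipschitzWith (δ / |w n|).toNNReal fun x => weightedEmbedding hk R w x (k n) := by
  simp only [weightedEmbedding_apply_self]
  refine (w n • R n).antilipschitz_of_bound fun x => ?_
  calc ‖x‖ ≤ δ / |w n| * ‖(w n • R n) x‖ := by
        rw [smul_apply, norm_smul, Real.norm_eq_abs, ← mul_assoc,
          div_mul_cancel₀ _ (abs_ne_zero.2 hw)]
        exact hRinv x
    _ ≤ _ := by gcongr; exact Real.le_coe_toNNReal _

theorem uniformContinuous_weightedEmbedding : UniformContinuous (weightedEmbedding hk R w) := by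
  refine uniformContinuous_pi.2 fun m => ?_
  by_cases hm : m ∈ Set.range k
  · obtain ⟨n, rfl⟩ := hm
    simp only [weightedEmbedding_apply_self]
    exact (w n • R n).uniformContinuous
  · simp only [weightedEmbedding_apply_of_notMem hk R w hm]
    exact uniformContinuous_const

end WeightedEmbedding

section LpConvergence

variable {ι : Type*} {E : ι → Type*} [∀ i, NormedAddCommGroup (E i)] {p : ℝ}

theorem summable_norm_sub_rpow (hp : 0 < p) {f g : ∀ i, E i}
    (hf : Summable fun i => ‖f i‖ ^ p) (hg : Summable fun i => ‖g i‖ ^ p) :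
    Summable fun i => ‖f i - g i‖ ^ p := by
  have hp' : 0 < (ENNReal.ofReal p).toReal := by rwa [ENNReal.toReal_ofReal hp.le]
  have hmem : ∀ {h : ∀ i, E i}, (Summable fun i => ‖h i‖ ^ p) → Memℓp h (ENNReal.ofReal p) :=
    fun hs => memℓp_gen (by rwa [ENNReal.toReal_ofReal hp.le])
  simpa [ENNReal.toReal_ofReal hp.le] using ((hmem hf).sub (hmem hg)).summable hp'

theorem tendsto_pi_nhds_of_tendsto_tsum_norm_sub_rpow {α : Type*} {l : Filter α} (hp : 0 < p)
    {F : α → ∀ i, E i} {z : ∀ i, E i} (hs : ∀ j, Summable fun i => ‖F j i - z i‖ ^ p)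
    (h : Tendsto (fun j => ∑' i, ‖F j i - z i‖ ^ p) l (𝓝 0)) : Tendsto F l (𝓝 z) := by
  refine tendsto_pi_nhds.2 fun i => tendsto_iff_norm_sub_tendsto_zero.2 ?_
  have hi : Tendsto (fun j => ‖F j i - z i‖ ^ p) l (𝓝 0) :=
    squeeze_zero (fun j => by positivity) (fun j => (hs j).le_tsum i fun _ _ => by positivity) h
  simpa [← Real.rpow_mul (norm_nonneg _), hp.ne'] using
    hi.rpow_const (p := p⁻¹) (Or.inr (by positivity))

end LpConvergence

theorem stmt14.{u, v} (X : Type u) [NormedAddCommGroup X] [NormedSpace ℝ X]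
    [CompleteSpace X] (hX : ¬ FiniteDimensional ℝ X)
    (Y : ℕ → Type v) [∀ n, NormedAddCommGroup (Y n)] [∀ n, NormedSpace ℝ (Y n)]
    [∀ n, CompleteSpace (Y n)]
    (k : ℕ → ℕ) (hk : StrictMono k) (δ : ℝ) (hδ : 0 < δ)
    (R : ∀ n, X →L[ℝ] Y (k n))
    (hR : ∀ n, ‖R n‖ ≤ δ) (hRinv : ∀ n x, ‖x‖ ≤ δ * ‖R n x‖)
    (p : ℝ) (hp : 0 < p) :
    ∃ S : Submodule ℝ (∀ n, Y n),
      (∀ f ∈ S, Summable fun n => ‖f n‖ ^ p) ∧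
      Cardinal.lift.{u} (Module.rank ℝ S) = Cardinal.lift.{v} (Module.rank ℝ X) ∧
      (∀ f ∈ S, f ≠ 0 → ∀ q : ℝ, 0 < q → q < p →
        ¬ Summable fun n => ‖f n‖ ^ q) ∧
      (∀ z : ∀ n, Y n, (Summable fun n => ‖z n‖ ^ p) →
        (∃ F : ℕ → ∀ n, Y n, (∀ j, F j ∈ S) ∧
          Tendsto (fun j => ∑' n, ‖F j n - z n‖ ^ p) atTop (𝓝 0)) → z ∈ S) := by
  obtain ⟨a, ha_pos, ha_sum, ha_rpow⟩ := exists_summable_forall_not_summable_rpow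
  set w : ℕ → ℝ := fun n => a n ^ p⁻¹
  have hw : ∀ q, (fun n => |w n| ^ q) = fun n => a n ^ (q / p) := fun q => funext fun n => by
    rw [abs_of_nonneg (rpow_nonneg (ha_pos n).le _), ← rpow_mul (ha_pos n).le, inv_mul_eq_div]
  set T := weightedEmbedding hk.injective R w
  have hT_antilip := antilipschitzWith_weightedEmbedding_apply hk.injective R w
    (Real.rpow_pos_of_pos (ha_pos 0) _).ne' (hRinv 0)
  have hT_summable : ∀ f ∈ LinearMap.range T, Summable fun n => ‖f n‖ ^ p := by
    rintro _ ⟨x, rfl⟩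
    refine summable_norm_rpow_weightedEmbedding hk.injective R w hp ?_ hR x
    rwa [hw, div_self hp.ne', funext fun n => Real.rpow_one (a n)]
  refine ⟨LinearMap.range T, hT_summable, ?_, ?_, ?_⟩
  · exact (LinearEquiv.ofInjective T
      (hT_antilip.injective.of_comp (f := fun y : ∀ m, Y m => y (k 0)))).lift_rank_eq.symm
  · rintro _ ⟨x, rfl⟩ hx q hq hqp
    refine not_summable_norm_rpow_weightedEmbedding hk.injective R w hq ?_ hδ.le hRinv ?_
    · rw [hw]
      exact ha_rpow _ ((div_lt_one hp).2 hqp)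
    · rintro rfl
      exact hx (map_zero T)
  · rintro z hz ⟨F, hFS, hF⟩
    have hFz : Tendsto F atTop (𝓝 z) := tendsto_pi_nhds_of_tendsto_tsum_norm_sub_rpow hp
      (fun j => summable_norm_sub_rpow hp (hT_summable _ (hFS j)) hz) hF
    have hclosed := isClosed_range_of_antilipschitzWith_comp (f := T)
      (uniformContinuous_weightedEmbedding hk.injective R w)
      (Pi.uniformContinuous_proj _ (k 0)) hT_antilip
    rw [← LinearMap.coe_range] at hclosed
    exact hclosed.mem_of_tendsto hFz (Eventually.of_forall hFS)
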